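/- For every natural number n, the limit as x tends to 0 of (-1)^(n+1)/(n! · x) + Γ(-n + x) equals ((-1)^(n+1)/n!) · (γ - H_n), where H_n = ∑_{k=1}^n 1/k is the n-th harmonic number (H_0 = 0). -/

import Mathlib

/-!
Induction on `n`, for `F n x = (-1)^(n+1) / (n! x) + Γ(x - n)`. For `n = 0`, `F 0 x` is the slope
of `Γ(x + 1)` at `x = 0`, so its limit is `Γ'(1) = -γ`. The recurrence
`Γ(x - n) = (x - n - 1) Γ(x - n - 1)` gives `F (n+1) x = ((-1)^(n+1) / (n+1)! - F n x) / (n + 1 - x)`,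
so the limits satisfy the same recursion as `(-1)^(n+1) / n! * (γ - H_n)`, by
`H_(n+1) = H_n + 1/(n+1)`.
-/

open Filter Topology Real

noncomputable def gammaRegularPart (n : ℕ) (x : ℝ) : ℝ :=
  (-1) ^ (n + 1) / (n.factorial * x) + Gamma (-(n : ℝ) + x)

lemma tendsto_Gamma_sub_inv_nhdsNE_zero :
    Tendsto (fun x : ℝ => Gamma x - x⁻¹) (𝓝[≠] 0) (𝓝 (-eulerMascheroniConstant)) := by
  have hderiv : HasDerivAt (fun x : ℝ => Gamma (x + 1)) (-eulerMascheroniConstant) 0 := by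
    have h := hasDerivAt_Gamma_one
    rw [← zero_add (1 : ℝ)] at h
    exact h.comp_add_const 0 1
  refine (hasDerivAt_iff_tendsto_slope.mp hderiv).congr' ?_
  filter_upwards [self_mem_nhdsWithin] with x (hx : x ≠ 0)
  rw [slope_def_field, zero_add, Gamma_one, Gamma_add_one hx, sub_zero]
  field_simp

lemma gammaRegularPart_succ (n : ℕ) {x : ℝ} (hx₀ : x ≠ 0) (hx : x ≠ n + 1) :
    gammaRegularPart (n + 1) x =
      ((-1) ^ (n + 1) / ((n + 1).factorial) - gammaRegularPart n x) / ((n + 1) - x) := by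
  have hsub : (n + 1) - x ≠ 0 := sub_ne_zero.mpr hx.symm
  have hpole : -((n + 1 : ℕ) : ℝ) + x ≠ 0 := by
    push_cast
    contrapose! hx
    linarith
  have hGamma :
      Gamma (-(n : ℝ) + x) = (-((n + 1 : ℕ) : ℝ) + x) * Gamma (-((n + 1 : ℕ) : ℝ) + x) := by
    rw [← Gamma_add_one hpole]
    push_cast
    ring_nf
  simp only [gammaRegularPart, hGamma, Nat.factorial_succ]
  push_cast
  field_simp
  ring

lemma tendsto_gammaRegularPart_succ {n : ℕ} {L : ℝ}
    (h : Tendsto (gammaRegularPart n) (𝓝[≠] 0) (𝓝 L)) :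
    Tendsto (gammaRegularPart (n + 1)) (𝓝[≠] 0)
      (𝓝 (((-1) ^ (n + 1) / ((n + 1).factorial) - L) / (n + 1))) := by
  have hden : Tendsto (fun x : ℝ => (n + 1) - x) (𝓝[≠] 0) (𝓝 ((n + 1) - 0)) :=
    tendsto_nhdsWithin_of_tendsto_nhds (continuous_const.sub continuous_id).continuousAt
  rw [sub_zero] at hden
  refine ((h.const_sub _).div hden (by positivity)).congr' ?_
  filter_upwards [self_mem_nhdsWithin,
    eventually_ne_nhdsWithin (by positivity : (0 : ℝ) ≠ n + 1)] with x hx₀ hx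
  exact (gammaRegularPart_succ n hx₀ hx).symm

theorem stmt_4 (n : ℕ) :
    Filter.Tendsto
      (fun x : ℝ => (-1) ^ (n + 1) / (n.factorial * x) + Real.Gamma (-(n : ℝ) + x))
      (nhdsWithin 0 {0}ᶜ)
      (nhds ((-1) ^ (n + 1) / n.factorial *
        (Real.eulerMascheroniConstant - (harmonic n : ℝ)))) := by
  change Tendsto (gammaRegularPart n) _ _
  induction n with
  | zero =>
    convert tendsto_Gamma_sub_inv_nhdsNE_zero using 1
    · ext x
      simp [gammaRegularPart, sub_eq_neg_add, div_eq_mul_inv]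
    · simp
  | succ n ih =>
    convert tendsto_gammaRegularPart_succ ih using 2
    rw [harmonic_succ, Nat.factorial_succ]
    push_cast
    field_simp
    ring
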